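/- Let p ∈ pH with normSq(p−1) ≠ 0 and let q : Fin n → pH. Set q'ₐ = (p−1)⁻¹·qₐ and p' = (p−1)⁻¹·(p+1). Then p'−1 = 2·(p−1)⁻¹, so normSq(p'−1) = 4/normSq(p−1) ≠ 0, and the inverse paraquaternionic Cayley transform recovers the original point: 2·(p'−1)⁻¹·q'ₐ = qₐ for all a, and (p'−1)⁻¹·(p'+1) = p. -/

import Mathlib

open scoped Quaternion

/-- The split quaternions (para-quaternions). -/
local notation "pH" => ℍ[ℝ, 1, 1]

/-- The norm form `normSq p = p * star p` (a real scalar) of signature (2,2). -/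
noncomputable def normSq (p : ℍ[ℝ, 1, 1]) : ℝ := (p * star p).re

/-- The inverse of a split quaternion `a` with `normSq a ≠ 0`:
`a⁻¹ = (normSq a)⁻¹ • star a`, a two-sided inverse. -/
noncomputable def pinv (a : ℍ[ℝ, 1, 1]) : ℍ[ℝ, 1, 1] := (normSq a)⁻¹ • star a

/-! Since `a * star a = star a * a = normSq a` is a real scalar, `pinv a` is a two-sided inverse
whenever `normSq a ≠ 0`. Writing `p + 1 = (p - 1) + 2` gives `p' = 1 + 2 (p - 1)⁻¹`, so
`p' - 1 = 2 (p - 1)⁻¹` has inverse `(p - 1) / 2`. Hence `2 (p' - 1)⁻¹ = p - 1` undoes the left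
multiplication by `(p - 1)⁻¹` on `q`, and the same computation applied to `p'` shows that the
`p`-component of the Cayley transform is an involution. -/

lemma add_one_eq_sub_one_add_two {R : Type*} [Ring R] (x : R) : x + 1 = x - 1 + 2 := by
  rw [← one_add_one_eq_two, ← add_assoc, sub_add_cancel]

section SplitQuaternion

open QuaternionAlgebra

variable {a b : pH}

lemma mul_star_eq_normSq (a : pH) : a * star a = (normSq a : pH) :=
  mul_star_eq_coe a

lemma star_mul_eq_normSq (a : pH) : star a * a = (normSq a : pH) := by
  rw [star_comm_self', mul_star_eq_normSq]

lemma normSq_star (a : pH) : normSq (star a) = normSq a := by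
  rw [normSq, star_star, star_comm_self']
  rfl

lemma normSq_smul (r : ℝ) (a : pH) : normSq (r • a) = r ^ 2 * normSq a := by
  simp only [normSq, QuaternionAlgebra.star_smul, smul_mul_assoc, mul_smul_comm, smul_smul,
    re_smul, smul_eq_mul, sq]

lemma normSq_pinv (a : pH) : normSq (pinv a) = (normSq a)⁻¹ := by
  rw [pinv, normSq_smul, normSq_star]
  by_cases h : normSq a = 0
  · simp [h]
  · field_simp

lemma mul_pinv (h : normSq a ≠ 0) : a * pinv a = 1 := by
  rw [pinv, mul_smul_comm, mul_star_eq_normSq, smul_coe, inv_mul_cancel₀ h, coe_one]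

lemma pinv_mul (h : normSq a ≠ 0) : pinv a * a = 1 := by
  rw [pinv, smul_mul_assoc, star_mul_eq_normSq, smul_coe, inv_mul_cancel₀ h, coe_one]

lemma pinv_mul_add (h : normSq a ≠ 0) (b : pH) : pinv a * (a + b) = 1 + pinv a * b := by
  rw [mul_add, pinv_mul h]

lemma pinv_eq_of_mul_eq_one (h : normSq a ≠ 0) (hab : a * b = 1) : pinv a = b :=
  calc pinv a = pinv a * (a * b) := by rw [hab, mul_one]
    _ = b := by rw [← mul_assoc, pinv_mul h, one_mul]

lemma pinv_smul (r : ℝ) (a : pH) : pinv (r • a) = r⁻¹ • pinv a := by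
  by_cases hr : r = 0
  · simp [hr, pinv]
  rw [pinv, pinv, normSq_smul, QuaternionAlgebra.star_smul, smul_smul, smul_smul]
  congr 1
  field_simp

lemma pinv_pinv (h : normSq a ≠ 0) : pinv (pinv a) = a :=
  pinv_eq_of_mul_eq_one (by rw [normSq_pinv]; exact inv_ne_zero h) (pinv_mul h)

end SplitQuaternion

section Cayley

noncomputable def cayley (p : pH) : pH := pinv (p - 1) * (p + 1)

variable {p : pH}

lemma cayley_sub_one (h : normSq (p - 1) ≠ 0) : cayley p - 1 = 2 * pinv (p - 1) := by
  rw [cayley, add_one_eq_sub_one_add_two, pinv_mul_add h, add_sub_cancel_left,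
    (Commute.ofNat_right _ 2).eq]

lemma cayley_sub_one_eq_smul (h : normSq (p - 1) ≠ 0) :
    cayley p - 1 = (2 : ℝ) • pinv (p - 1) := by
  rw [cayley_sub_one h, two_mul, two_smul]

lemma normSq_cayley_sub_one (h : normSq (p - 1) ≠ 0) :
    normSq (cayley p - 1) = 4 / normSq (p - 1) := by
  rw [cayley_sub_one_eq_smul h, normSq_smul, normSq_pinv]
  norm_num [div_eq_mul_inv]

lemma normSq_cayley_sub_one_ne_zero (h : normSq (p - 1) ≠ 0) :
    normSq (cayley p - 1) ≠ 0 := by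
  rw [normSq_cayley_sub_one h]
  exact div_ne_zero four_ne_zero h

lemma two_mul_pinv_cayley_sub_one (h : normSq (p - 1) ≠ 0) :
    2 * pinv (cayley p - 1) = p - 1 := by
  rw [cayley_sub_one_eq_smul h, pinv_smul, pinv_pinv h, mul_smul_comm, two_mul, ← two_smul ℝ,
    smul_smul, inv_mul_cancel₀ two_ne_zero, one_smul]

lemma cayley_cayley (h : normSq (p - 1) ≠ 0) : cayley (cayley p) = p := by
  rw [cayley, add_one_eq_sub_one_add_two, pinv_mul_add (normSq_cayley_sub_one_ne_zero h),
    (Commute.ofNat_right _ 2).eq, two_mul_pinv_cayley_sub_one h, add_sub_cancel]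

end Cayley

/-- The inverse paraquaternionic Cayley transform
`(q',p') ↦ (2·(p'−1)⁻¹·q', (p'−1)⁻¹·(p'+1))` inverts the Cayley transform
`C(q,p) = ((p−1)⁻¹·q, (p−1)⁻¹·(p+1))`: with `q'ₐ = (p−1)⁻¹·qₐ` and
`p' = (p−1)⁻¹·(p+1)` one has `p'−1 = 2·(p−1)⁻¹`, hence
`normSq (p'−1) = 4 / normSq (p−1) ≠ 0`, and
`2·(p'−1)⁻¹·q'ₐ = qₐ`, `(p'−1)⁻¹·(p'+1) = p`. -/
theorem cayley_inverse_recovers (n : ℕ) (q : Fin n → pH) (p : pH)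
    (h : normSq (p - 1) ≠ 0)
    (q' : Fin n → pH) (p' : pH)
    (hq' : ∀ a, q' a = pinv (p - 1) * q a)
    (hp' : p' = pinv (p - 1) * (p + 1)) :
    p' - 1 = 2 * pinv (p - 1) ∧
    normSq (p' - 1) = 4 / normSq (p - 1) ∧
    normSq (p' - 1) ≠ 0 ∧
    (∀ a, 2 * pinv (p' - 1) * q' a = q a) ∧
    pinv (p' - 1) * (p' + 1) = p := by
  obtain rfl : p' = cayley p := hp'
  refine ⟨cayley_sub_one h, normSq_cayley_sub_one h, normSq_cayley_sub_one_ne_zero h,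
    fun a => ?_, cayley_cayley h⟩
  rw [hq', two_mul_pinv_cayley_sub_one h, ← mul_assoc, mul_pinv h, one_mul]
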